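/- arXiv:2206.07534 — 4 statements merged into one kernel-verified Lean document; each statement's English description precedes it below -/
import Mathlib

section
/- Let X ⊆ ℝ^{n_x} be an open convex set, let f : ℝ^{n_x} → ℝ^{n_x} and g : ℝ^{n_x} → ℝ^{n_x×n_u}, and let Φ : ℝ^{n_x} → ℝ^{n_f} be continuously differentiable. Suppose A ∈ ℝ^{n_f×n_f} satisfies Φ(f(x)) = A Φ(x) for all x ∈ X, and suppose that for a given x ∈ X and u ∈ ℝ^{n_u} the whole segment {f(x) + λ g(x)u : λ ∈ [0,1]} lies in X. Then Φ(f(x) + g(x)u) = A Φ(x) + B(x,u) u, where B(x,u) = (∫₀¹ DΦ(f(x) + λ g(x)u) dλ) · g(x) and DΦ denotes the Jacobian matrix of Φ. -/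
section FundamentalTheorem

variable {E F : Type*} [NormedAddCommGroup E] [NormedSpace ℝ E]
  [NormedAddCommGroup F] [NormedSpace ℝ F] {Φ : E → F} {a v : E}

theorem continuousOn_fderiv_add_smul
    (hΦ : ∀ t ∈ Set.Icc (0 : ℝ) 1, ContDiffAt ℝ 1 Φ (a + t • v)) :
    ContinuousOn (fun t : ℝ => fderiv ℝ Φ (a + t • v)) (Set.Icc 0 1) := by
  intro t ht
  have hD : ContinuousAt (fderiv ℝ Φ) (a + t • v) :=
    ((hΦ t ht).fderiv_right le_rfl).continuousAt (n := 0)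
  exact (hD.comp (f := fun s : ℝ => a + s • v) (by fun_prop)).continuousWithinAt

theorem map_add_eq_add_integral_fderiv_apply [CompleteSpace F]
    (hΦ : ∀ t ∈ Set.Icc (0 : ℝ) 1, ContDiffAt ℝ 1 Φ (a + t • v)) :
    Φ (a + v) = Φ a + (∫ t in (0 : ℝ)..1, fderiv ℝ Φ (a + t • v)) v := by
  have taylor := map_add_eq_sum_add_integral_iteratedFDeriv (n := 0) (by simpa using hΦ)
  rw [ContinuousLinearMap.intervalIntegral_apply
    ((continuousOn_fderiv_add_smul hΦ).intervalIntegrable_of_Icc zero_le_one)]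
  simpa using taylor

end FundamentalTheorem

theorem koopman_lifting_with_input_general {nx nu nf : ℕ}
    (X : Set (Fin nx → ℝ))
    (f : (Fin nx → ℝ) → (Fin nx → ℝ))
    (g : (Fin nx → ℝ) → Matrix (Fin nx) (Fin nu) ℝ)
    (Φ : (Fin nx → ℝ) → (Fin nf → ℝ))
    (hΦ : ContDiff ℝ 1 Φ)
    (A : Matrix (Fin nf) (Fin nf) ℝ)
    (hA : ∀ x ∈ X, Φ (f x) = A.mulVec (Φ x))
    (x : Fin nx → ℝ) (u : Fin nu → ℝ) (hx : x ∈ X) :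
    Φ (f x + (g x).mulVec u)
      = A.mulVec (Φ x)
        + (∫ lam in (0:ℝ)..1, fderiv ℝ Φ (f x + lam • (g x).mulVec u))
            ((g x).mulVec u) := by
  rw [map_add_eq_add_integral_fderiv_apply fun _ _ => hΦ.contDiffAt, hA x hx]

/-- Exact finite-dimensional Koopman lifting of the control-affine system
`x⁺ = f x + g x · u`: if `Φ` is `C¹`, `Φ ∘ f = A Φ` on an open convex set `X`,
and the segment `{f x + λ (g x) u : λ ∈ [0,1]}` lies in `X`, then
`Φ (f x + g x u) = A Φ(x) + B(x,u) u` with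
`B(x,u) = (∫₀¹ DΦ(f x + λ g x u) dλ) · g x`. -/
theorem koopman_lifting_with_input {nx nu nf : ℕ}
    (X : Set (Fin nx → ℝ)) (hXopen : IsOpen X) (hXconv : Convex ℝ X)
    (f : (Fin nx → ℝ) → (Fin nx → ℝ))
    (g : (Fin nx → ℝ) → Matrix (Fin nx) (Fin nu) ℝ)
    (Φ : (Fin nx → ℝ) → (Fin nf → ℝ))
    (hΦ : ContDiff ℝ 1 Φ)
    (A : Matrix (Fin nf) (Fin nf) ℝ)
    (hA : ∀ x ∈ X, Φ (f x) = A.mulVec (Φ x))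
    (x : Fin nx → ℝ) (u : Fin nu → ℝ) (hx : x ∈ X)
    (hseg : ∀ lam ∈ Set.Icc (0 : ℝ) 1, f x + lam • (g x).mulVec u ∈ X) :
    Φ (f x + (g x).mulVec u)
      = A.mulVec (Φ x)
        + (∫ lam in (0:ℝ)..1, fderiv ℝ Φ (f x + lam • (g x).mulVec u))
            ((g x).mulVec u) :=
  koopman_lifting_with_input_general X f g Φ hΦ A hA x u hx
end

section
/- Let A ∈ ℝ^{n_f×n_f}, B, B̂ ∈ ℝ^{n_f×n_u}, C ∈ ℝ^{n_x×n_f}, γ > 0, and let X ∈ ℝ^{n_f×n_f} be symmetric positive definite with P = γ X^{-1}. Then the 4×4 block matrix M = [[X, A X, B − B̂, 0], [X Aᵀ, X, 0, X Cᵀ], [Bᵀ − B̂ᵀ, 0, γ I_{n_u}, 0], [0, C X, 0, γ I_{n_x}]] is positive definite if and only if for all (e, u) ∈ ℝ^{n_f} × ℝ^{n_u} with (e, u) ≠ (0, 0), (A e + (B − B̂) u)ᵀ P (A e + (B − B̂) u) − eᵀ P e + ‖C e‖₂² − γ² ‖u‖₂² < 0. -/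
open Matrix

/-!
Index the LMI matrix by vectors `((x, y), (u, w))`. Completing the square in `x` and `w`, whose
diagonal blocks `X` and `γ I` are positive definite, turns its quadratic form into
`(x + X⁻¹ s)ᵀ X (x + X⁻¹ s) + γ ‖w + γ⁻¹ C X y‖² - γ⁻¹ D(X y, u)` with `s = A X y + (B - B̂) u`,
where `D` is the left-hand side of the dissipation inequality for `P = γ X⁻¹`. Both squares can be
made to vanish whatever `(y, u)` is, so the form is positive away from zero iff `D(X y, u) < 0`
for `(y, u) ≠ 0`, and `e = X y` is a bijective change of variables.
-/

theorem forall_pos_add_shift_iff {E F : Type*} [AddGroup E] [Zero F]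
    (a : E → ℝ) (L : F → E) (b : F → ℝ) (ha : ∀ z, z ≠ 0 → 0 < a z) (ha₀ : a 0 = 0)
    (hL₀ : L 0 = 0) (hb₀ : b 0 = 0) :
    (∀ x y, (x ≠ 0 ∨ y ≠ 0) → 0 < a (x + L y) + b y) ↔ ∀ y, y ≠ 0 → 0 < b y := by
  have ha_nonneg : ∀ z, 0 ≤ a z := fun z => by
    rcases eq_or_ne z 0 with rfl | hz
    exacts [ha₀.ge, (ha z hz).le]
  constructor
  · intro h y hy
    simpa [ha₀] using h (-L y) y (.inr hy)
  · intro h x y hxy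
    rcases eq_or_ne y 0 with rfl | hy
    · simpa [hL₀, hb₀] using ha x (hxy.resolve_right (· rfl))
    · exact add_pos_of_nonneg_of_pos (ha_nonneg _) (h y hy)

theorem forall_ne_zero_comp_iff {E F G : Type*} [Zero E] [Zero F] [Zero G] {f : E → F}
    (hf : Function.Bijective f) (hf₀ : f 0 = 0) {q : F → G → Prop} :
    (∀ yu : E × G, yu ≠ 0 → q (f yu.1) yu.2) ↔ ∀ e u, (e ≠ 0 ∨ u ≠ 0) → q e u := by
  rw [hf.2.forall]
  simp only [Prod.forall, ne_eq, Prod.mk_eq_zero, not_and_or, hf.1.eq_iff' hf₀]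

theorem sumElim_eq_zero_iff {α β R : Type*} [Zero R] {f : α → R} {g : β → R} :
    f ⊕ᵥ g = 0 ↔ f = 0 ∧ g = 0 := by
  rw [← Sum.elim_zero_zero, Sum.elim_eq_iff]

theorem forall_ne_zero_sumElim_iff {m n o q R : Type*} [Zero R]
    {p : ((m ⊕ n) ⊕ (o ⊕ q) → R) → Prop} :
    (∀ v, v ≠ 0 → p v) ↔ ∀ (xw : (m → R) × (q → R)) (yu : (n → R) × (o → R)),
      (xw ≠ 0 ∨ yu ≠ 0) → p ((xw.1 ⊕ᵥ yu.1) ⊕ᵥ (yu.2 ⊕ᵥ xw.2)) := by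
  have hv : ∀ v : (m ⊕ n) ⊕ (o ⊕ q) → R, v =
      ((v ∘ .inl ∘ .inl) ⊕ᵥ (v ∘ .inl ∘ .inr)) ⊕ᵥ ((v ∘ .inr ∘ .inl) ⊕ᵥ (v ∘ .inr ∘ .inr)) :=
    fun v => by ext ((i | i) | (i | i)) <;> rfl
  have hne : ∀ x y u w, (x ⊕ᵥ y) ⊕ᵥ (u ⊕ᵥ w) ≠ (0 : (m ⊕ n) ⊕ (o ⊕ q) → R) ↔
      (x, w) ≠ 0 ∨ (y, u) ≠ 0 := by
    simp only [ne_eq, sumElim_eq_zero_iff, Prod.mk_eq_zero]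
    tauto
  constructor
  · rintro h ⟨x, w⟩ ⟨y, u⟩ hxwyu
    exact h _ ((hne x y u w).2 hxwyu)
  · intro h v hv0
    rw [hv v] at hv0 ⊢
    exact h (_, _) (_, _) ((hne _ _ _ _).1 hv0)

section L2Gain

variable {m n p : Type*} [Fintype m]

def l2GainLMI [DecidableEq n] [DecidableEq p] (A : Matrix m m ℝ) (Δ : Matrix m n ℝ)
    (C : Matrix p m ℝ) (X : Matrix m m ℝ) (γ : ℝ) :
    Matrix ((m ⊕ m) ⊕ (n ⊕ p)) ((m ⊕ m) ⊕ (n ⊕ p)) ℝ :=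
  fromBlocks (fromBlocks X (A * X) (X * Aᵀ) X) (fromBlocks Δ 0 0 (X * Cᵀ))
    (fromBlocks Δᵀ 0 0 (C * X)) (fromBlocks (γ • 1) 0 0 (γ • 1))

/-- `V (A e + Δ u) - V e - s (u, C e)` for the storage `V e = eᵀ P e` and the supply rate
`s (u, ε) = γ² ‖u‖² - ‖ε‖²`. -/
def dissipationGap [Fintype n] [Fintype p] (A : Matrix m m ℝ) (Δ : Matrix m n ℝ)
    (C : Matrix p m ℝ) (P : Matrix m m ℝ) (γ : ℝ) (e : m → ℝ) (u : n → ℝ) : ℝ :=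
  (A *ᵥ e + Δ *ᵥ u) ⬝ᵥ P *ᵥ (A *ᵥ e + Δ *ᵥ u) - e ⬝ᵥ P *ᵥ e + C *ᵥ e ⬝ᵥ C *ᵥ e - γ ^ 2 * (u ⬝ᵥ u)

theorem dotProduct_mulVec_transpose_mulVec [Fintype n] {X : Matrix m m ℝ} (hXs : Xᵀ = X)
    (B : Matrix n m ℝ) (y : m → ℝ) (z : n → ℝ) : y ⬝ᵥ X *ᵥ Bᵀ *ᵥ z = z ⬝ᵥ B *ᵥ X *ᵥ y := by
  rw [mulVec_mulVec, ← dotProduct_transpose_mulVec, transpose_mul, transpose_transpose, hXs,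
    mulVec_mulVec]

theorem dotProduct_add_inv_mulVec_add [DecidableEq m] {X : Matrix m m ℝ} (hXs : Xᵀ = X)
    (hX : IsUnit X.det) (x s : m → ℝ) :
    (x + X⁻¹ *ᵥ s) ⬝ᵥ X *ᵥ (x + X⁻¹ *ᵥ s) = x ⬝ᵥ X *ᵥ x + 2 * (x ⬝ᵥ s) + s ⬝ᵥ X⁻¹ *ᵥ s := by
  have hcross : X⁻¹ *ᵥ s ⬝ᵥ X *ᵥ x = x ⬝ᵥ s := by
    rw [← dotProduct_transpose_mulVec, hXs, mulVec_mulVec, mul_nonsing_inv _ hX, one_mulVec]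
  simp only [mulVec_add, add_dotProduct, dotProduct_add, mulVec_mulVec, mul_nonsing_inv _ hX,
    one_mulVec, hcross, dotProduct_comm (X⁻¹ *ᵥ s) s]
  ring

theorem Matrix.PosDef.dotProduct_mulVec_add_mul_dotProduct_pos [Fintype p] {X : Matrix m m ℝ}
    (hX : X.PosDef) {γ : ℝ} (hγ : 0 < γ) {x : m → ℝ} {w : p → ℝ} (hxw : (x, w) ≠ 0) :
    0 < x ⬝ᵥ X *ᵥ x + γ * (w ⬝ᵥ w) := by
  have hXx : 0 ≤ x ⬝ᵥ X *ᵥ x := hX.posSemidef.dotProduct_mulVec_nonneg x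
  have hww : 0 ≤ w ⬝ᵥ w := dotProduct_star_self_nonneg w
  rcases not_and_or.mp (Prod.mk_eq_zero.not.mp hxw) with hx | hw
  · have := hX.dotProduct_mulVec_pos hx
    positivity
  · have : 0 < w ⬝ᵥ w := dotProduct_star_self_pos_iff.mpr hw
    positivity

variable [DecidableEq n] [DecidableEq p]

theorem l2GainLMI_isHermitian (A : Matrix m m ℝ) (Δ : Matrix m n ℝ) (C : Matrix p m ℝ)
    {X : Matrix m m ℝ} (hXs : Xᵀ = X) (γ : ℝ) : (l2GainLMI A Δ C X γ).IsHermitian := by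
  simp [IsHermitian, conjTranspose_eq_transpose_of_trivial, l2GainLMI, fromBlocks_transpose,
    hXs]

variable [Fintype n] [Fintype p]

theorem dotProduct_l2GainLMI_mulVec (A : Matrix m m ℝ) (Δ : Matrix m n ℝ) (C : Matrix p m ℝ)
    {X : Matrix m m ℝ} (hXs : Xᵀ = X) (γ : ℝ) (x y : m → ℝ) (u : n → ℝ) (w : p → ℝ) :
    let v := (x ⊕ᵥ y) ⊕ᵥ (u ⊕ᵥ w)
    v ⬝ᵥ l2GainLMI A Δ C X γ *ᵥ v = x ⬝ᵥ X *ᵥ x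
      + 2 * (x ⬝ᵥ A *ᵥ X *ᵥ y + x ⬝ᵥ Δ *ᵥ u + w ⬝ᵥ C *ᵥ X *ᵥ y)
      + y ⬝ᵥ X *ᵥ y + γ * (u ⬝ᵥ u) + γ * (w ⬝ᵥ w) := by
  simp only [l2GainLMI, fromBlocks_mulVec, sumElim_dotProduct_sumElim, Sum.elim_comp_inl,
    Sum.elim_comp_inr, zero_mulVec, add_zero, zero_add, dotProduct_add, ← mulVec_mulVec,
    smul_mulVec, one_mulVec, dotProduct_smul, smul_eq_mul, dotProduct_transpose_mulVec,
    dotProduct_mulVec_transpose_mulVec hXs]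
  ring

theorem dotProduct_l2GainLMI_mulVec_eq [DecidableEq m] (A : Matrix m m ℝ) (Δ : Matrix m n ℝ)
    (C : Matrix p m ℝ) {X : Matrix m m ℝ} (hXs : Xᵀ = X) (hX : IsUnit X.det) {γ : ℝ} (hγ : γ ≠ 0)
    (x y : m → ℝ) (u : n → ℝ) (w : p → ℝ) :
    let v := (x ⊕ᵥ y) ⊕ᵥ (u ⊕ᵥ w)
    let s := A *ᵥ X *ᵥ y + Δ *ᵥ u
    let t := C *ᵥ X *ᵥ y
    v ⬝ᵥ l2GainLMI A Δ C X γ *ᵥ v = (x + X⁻¹ *ᵥ s) ⬝ᵥ X *ᵥ (x + X⁻¹ *ᵥ s)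
      + γ * ((w + γ⁻¹ • t) ⬝ᵥ (w + γ⁻¹ • t))
      - γ⁻¹ * dissipationGap A Δ C (γ • X⁻¹) γ (X *ᵥ y) u := by
  intro v s t
  have hXy : X *ᵥ y ⬝ᵥ (γ • X⁻¹) *ᵥ X *ᵥ y = γ * (y ⬝ᵥ X *ᵥ y) := by
    rw [smul_mulVec, mulVec_mulVec, nonsing_inv_mul _ hX, one_mulVec, dotProduct_smul, smul_eq_mul,
      dotProduct_comm]
  rw [dotProduct_l2GainLMI_mulVec A Δ C hXs, dotProduct_add_inv_mulVec_add hXs hX, dissipationGap,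
    hXy]
  simp only [smul_mulVec, dotProduct_smul, add_dotProduct, dotProduct_add, smul_dotProduct,
    smul_eq_mul, dotProduct_comm _ w, s, t]
  field_simp
  ring

theorem l2GainLMI_posDef_iff [DecidableEq m] (A : Matrix m m ℝ) (Δ : Matrix m n ℝ)
    (C : Matrix p m ℝ) {X : Matrix m m ℝ} (hX : X.PosDef) {γ : ℝ} (hγ : 0 < γ) :
    (l2GainLMI A Δ C X γ).PosDef ↔
      ∀ e u, (e ≠ 0 ∨ u ≠ 0) → dissipationGap A Δ C (γ • X⁻¹) γ e u < 0 := by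
  have hXs : Xᵀ = X := by simpa [conjTranspose_eq_transpose_of_trivial] using hX.isHermitian.eq
  have hdet : IsUnit X.det := (isUnit_iff_isUnit_det X).mp hX.isUnit
  have hcompl := forall_pos_add_shift_iff
    (a := fun xw : (m → ℝ) × (p → ℝ) => xw.1 ⬝ᵥ X *ᵥ xw.1 + γ * (xw.2 ⬝ᵥ xw.2))
    (L := fun yu : (m → ℝ) × (n → ℝ) =>
      (X⁻¹ *ᵥ (A *ᵥ X *ᵥ yu.1 + Δ *ᵥ yu.2), γ⁻¹ • C *ᵥ X *ᵥ yu.1))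
    (b := fun yu => -(γ⁻¹ * dissipationGap A Δ C (γ • X⁻¹) γ (X *ᵥ yu.1) yu.2))
    (fun _ hxw => hX.dotProduct_mulVec_add_mul_dotProduct_pos hγ hxw) (by simp) (by simp)
    (by simp [dissipationGap])
  rw [posDef_iff_dotProduct_mulVec, and_iff_right (l2GainLMI_isHermitian A Δ C hXs γ),
    forall_ne_zero_sumElim_iff]
  simp only [star_trivial, dotProduct_l2GainLMI_mulVec_eq A Δ C hXs hdet hγ.ne', sub_eq_add_neg]
  refine hcompl.trans (Iff.trans ?_ (forall_ne_zero_comp_iff (f := X.mulVec)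
    ⟨mulVec_injective_iff_isUnit.2 hX.isUnit, mulVec_surjective_iff_isUnit.2 hX.isUnit⟩
    (mulVec_zero X)))
  simp only [neg_pos, ← smul_eq_mul, smul_neg_iff_of_pos_left (inv_pos.2 hγ)]

end L2Gain

/-- The ℓ₂-gain synthesis LMI: with `P = γ X⁻¹` (`X` symmetric positive definite), the
block matrix `[[X, AX, B−B̂, 0], [XAᵀ, X, 0, XCᵀ], [Bᵀ−B̂ᵀ, 0, γI, 0], [0, CX, 0, γI]]`
is positive definite iff the quadratic dissipation inequality
`(Ae + (B−B̂)u)ᵀ P (Ae + (B−B̂)u) − eᵀPe + ‖Ce‖₂² − γ²‖u‖₂² < 0` holds for all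
`(e,u) ≠ (0,0)`. -/
theorem l2_gain_LMI_iff {nf nu nx : ℕ}
    (A : Matrix (Fin nf) (Fin nf) ℝ)
    (B Bh : Matrix (Fin nf) (Fin nu) ℝ)
    (C : Matrix (Fin nx) (Fin nf) ℝ)
    (γ : ℝ) (hγ : 0 < γ)
    (X : Matrix (Fin nf) (Fin nf) ℝ) (hX : X.PosDef)
    (P : Matrix (Fin nf) (Fin nf) ℝ) (hP : P = γ • X⁻¹) :
    (Matrix.fromBlocks
        (Matrix.fromBlocks X (A * X) (X * Aᵀ) X)
        (Matrix.fromBlocks (B - Bh) 0 0 (X * Cᵀ))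
        (Matrix.fromBlocks (Bᵀ - Bhᵀ) 0 0 (C * X))
        (Matrix.fromBlocks (γ • (1 : Matrix (Fin nu) (Fin nu) ℝ)) 0 0
          (γ • (1 : Matrix (Fin nx) (Fin nx) ℝ)))).PosDef
    ↔ ∀ (e : Fin nf → ℝ) (u : Fin nu → ℝ), (e ≠ 0 ∨ u ≠ 0) →
        (A.mulVec e + (B - Bh).mulVec u) ⬝ᵥ
            P.mulVec (A.mulVec e + (B - Bh).mulVec u)
          - e ⬝ᵥ P.mulVec e
          + (C.mulVec e) ⬝ᵥ (C.mulVec e)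
          - γ ^ 2 * (u ⬝ᵥ u) < 0 := by
  subst hP
  rw [← transpose_sub]
  exact l2GainLMI_posDef_iff A (B - Bh) C hX hγ
end

section
/- Let A ∈ ℝ^{n_f×n_f}, B, B̂ ∈ ℝ^{n_f×n_u}, γ > 0, and let X ∈ ℝ^{n_f×n_f} be symmetric positive definite with P = X^{-1}. Then the 3×3 block matrix M = [[X, A X, B − B̂], [X Aᵀ, X, 0], [Bᵀ − B̂ᵀ, 0, γ I_{n_u}]] is positive definite if and only if for all (e, u) ∈ ℝ^{n_f} × ℝ^{n_u} with (e, u) ≠ (0, 0), (A e + (B − B̂) u)ᵀ P (A e + (B − B̂) u) − eᵀ P e − γ ‖u‖₂² < 0. -/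
/-!
Reordering the blocks, the matrix is `[[X, C T], [(C T)ᵀ, Tᵀ D T]]` with `C = [A, B - B̂]`,
`T = diag(X, I)` and `D = diag(P, γ I)` (the lower-right block uses `X P X = X`).
By the Schur complement in the positive definite block `X`, it is positive definite iff
`Tᵀ (D - Cᵀ P C) T` is, and, `T` being invertible, iff `D - Cᵀ P C` is. The quadratic form of
`D - Cᵀ P C` at `(e, u)` is `eᵀ P e + γ ‖u‖² - (A e + (B - B̂) u)ᵀ P (A e + (B - B̂) u)`.
-/

open Matrix

theorem Sum.elim_eq_zero_iff {m n R : Type*} [Zero R] {x : m → R} {y : n → R} :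
    x ⊕ᵥ y = 0 ↔ x = 0 ∧ y = 0 := by
  simp [funext_iff, Sum.forall]

namespace Matrix

variable {l m n R : Type*}

theorem fromBlocks_fromBlocks_submatrix_sumAssoc_symm {α : Type*}
    (A₁₁ : Matrix l l α) (A₁₂ : Matrix l m α) (A₂₁ : Matrix m l α) (A₂₂ : Matrix m m α)
    (B₁ : Matrix l n α) (B₂ : Matrix m n α) (C₁ : Matrix n l α) (C₂ : Matrix n m α)
    (D : Matrix n n α) :
    (fromBlocks (fromBlocks A₁₁ A₁₂ A₂₁ A₂₂) (fromRows B₁ B₂) (fromCols C₁ C₂) D).submatrix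
        (Equiv.sumAssoc l m n).symm (Equiv.sumAssoc l m n).symm =
      fromBlocks A₁₁ (fromCols A₁₂ B₁) (fromRows A₂₁ C₁) (fromBlocks A₂₂ B₂ C₂ D) := by
  ext (i | i | i) (j | j | j) <;> rfl

theorem dotProduct_transpose_mul_mul_mulVec [CommSemiring R] [Fintype m] [Fintype n]
    (C : Matrix m n R) (P : Matrix m m R) (x : n → R) :
    x ⬝ᵥ (Cᵀ * P * C) *ᵥ x = (C *ᵥ x) ⬝ᵥ P *ᵥ (C *ᵥ x) := by
  rw [← mulVec_mulVec, ← mulVec_mulVec, dotProduct_mulVec, vecMul_transpose]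

section PosDef

variable [Ring R] [PartialOrder R] [StarRing R]

theorem posDef_submatrix_equiv {M : Matrix n n R} (e : m ≃ n) :
    (M.submatrix e e).PosDef ↔ M.PosDef :=
  ⟨fun h => by simpa using h.submatrix e.symm.injective, fun h => h.submatrix e.injective⟩

theorem posDef_iff_dotProduct_mulVec_sumElim [Fintype m] [Fintype n]
    {M : Matrix (m ⊕ n) (m ⊕ n) R} :
    M.PosDef ↔ M.IsHermitian ∧
      ∀ x y, (x ≠ 0 ∨ y ≠ 0) → 0 < star (x ⊕ᵥ y) ⬝ᵥ M *ᵥ (x ⊕ᵥ y) := by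
  rw [posDef_iff_dotProduct_mulVec]
  refine and_congr_right fun _ => ⟨fun h x y hxy => h ?_, fun h z hz => ?_⟩
  · rwa [Ne, Sum.elim_eq_zero_iff, not_and_or]
  · obtain ⟨x, y, rfl⟩ : ∃ x y, z = x ⊕ᵥ y := ⟨_, _, (Sum.elim_comp_inl_inr z).symm⟩
    exact h x y (by rwa [Ne, Sum.elim_eq_zero_iff, not_and_or] at hz)

end PosDef

namespace PosDef

variable [CommRing R] [PartialOrder R] [StarRing R] [StarOrderedRing R]
  [Fintype m] [Fintype n] [DecidableEq m] {A : Matrix m m R}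

theorem posDef_fromBlocks₁₁_iff (B : Matrix m n R) (D : Matrix n n R) (hA : A.PosDef)
    [Invertible A] : (fromBlocks A B Bᴴ D).PosDef ↔ (D - Bᴴ * A⁻¹ * B).PosDef := by
  simp only [posDef_iff_dotProduct_mulVec, IsHermitian.fromBlocks₁₁ _ _ hA.1,
    and_congr_right_iff]
  intro _
  constructor
  · intro h y hy
    have := h (x := -((A⁻¹ * B) *ᵥ y) ⊕ᵥ y) fun h0 => hy (Sum.elim_eq_zero_iff.mp h0).2
    rwa [dotProduct_mulVec, schur_complement_eq₁₁ B D _ _ hA.1, neg_add_cancel, dotProduct_zero,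
      zero_add, ← dotProduct_mulVec] at this
  · intro h z hz
    obtain ⟨x, y, rfl⟩ : ∃ x y, z = x ⊕ᵥ y := ⟨_, _, (Sum.elim_comp_inl_inr z).symm⟩
    rw [dotProduct_mulVec, schur_complement_eq₁₁ B D _ _ hA.1, ← dotProduct_mulVec,
      ← dotProduct_mulVec]
    by_cases hy : y = 0
    · have hx : x ≠ 0 := by rintro rfl; exact hz (by rw [hy, Sum.elim_zero_zero])
      simpa [hy] using hA.dotProduct_mulVec_pos hx
    · exact add_pos_of_nonneg_of_pos (hA.posSemidef.dotProduct_mulVec_nonneg _) (h hy)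

theorem posDef_fromBlocks₁₁_mul_iff [DecidableEq n] (B : Matrix m n R) (D : Matrix n n R)
    (hA : A.PosDef) [Invertible A] {U : Matrix n n R} (hU : IsUnit U) :
    (fromBlocks A (B * U) (B * U)ᴴ (star U * D * U)).PosDef ↔ (D - Bᴴ * A⁻¹ * B).PosDef := by
  have hconj : star U * D * U - (B * U)ᴴ * A⁻¹ * (B * U) = star U * (D - Bᴴ * A⁻¹ * B) * U := by
    simp only [conjTranspose_mul, star_eq_conjTranspose, Matrix.mul_sub, Matrix.sub_mul,
      Matrix.mul_assoc]
  rw [hA.posDef_fromBlocks₁₁_iff, hconj, hU.posDef_star_left_conjugate_iff]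

end PosDef

end Matrix

theorem posDef_dissipation_iff {m n : Type*} [Fintype m] [Fintype n] [DecidableEq n]
    {P : Matrix m m ℝ} (hP : P.IsHermitian) (A : Matrix m m ℝ) (B : Matrix m n ℝ) (γ : ℝ) :
    (fromBlocks P 0 0 (γ • 1) - (fromCols A B)ᴴ * P * fromCols A B).PosDef ↔
      ∀ e u, (e ≠ 0 ∨ u ≠ 0) →
        (A *ᵥ e + B *ᵥ u) ⬝ᵥ P *ᵥ (A *ᵥ e + B *ᵥ u) - e ⬝ᵥ P *ᵥ e - γ * (u ⬝ᵥ u) < 0 := by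
  have hherm : (fromBlocks P 0 0 (γ • 1) - (fromCols A B)ᴴ * P * fromCols A B).IsHermitian :=
    (hP.fromBlocks conjTranspose_zero (isHermitian_one.smul (.all γ))).sub
      (isHermitian_conjTranspose_mul_mul _ hP)
  rw [posDef_iff_dotProduct_mulVec_sumElim, and_iff_right hherm]
  refine forall₂_congr fun e u => imp_congr_right fun _ => ?_
  rw [star_trivial, sub_mulVec, dotProduct_sub, conjTranspose_eq_transpose_of_trivial,
    dotProduct_transpose_mul_mul_mulVec, fromCols_mulVec_sumElim]
  simp only [fromBlocks_mulVec, Sum.elim_comp_inl, Sum.elim_comp_inr, zero_mulVec, add_zero,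
    zero_add, smul_mulVec, one_mulVec, sumElim_dotProduct_sumElim, dotProduct_smul, smul_eq_mul]
  constructor <;> intro h <;> linarith

theorem generalized_H2_LMI_iff_general {nf nu : ℕ}
    (A : Matrix (Fin nf) (Fin nf) ℝ)
    (B Bh : Matrix (Fin nf) (Fin nu) ℝ)
    (γ : ℝ)
    (X : Matrix (Fin nf) (Fin nf) ℝ) (hX : X.PosDef)
    (P : Matrix (Fin nf) (Fin nf) ℝ) (hP : P = X⁻¹) :
    (Matrix.fromBlocks
        (Matrix.fromBlocks X (A * X) (X * Aᵀ) X)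
        (Matrix.fromRows (B - Bh) (0 : Matrix (Fin nf) (Fin nu) ℝ))
        (Matrix.fromCols (Bᵀ - Bhᵀ) (0 : Matrix (Fin nu) (Fin nf) ℝ))
        (γ • (1 : Matrix (Fin nu) (Fin nu) ℝ))).PosDef
    ↔ ∀ (e : Fin nf → ℝ) (u : Fin nu → ℝ), (e ≠ 0 ∨ u ≠ 0) →
        (A.mulVec e + (B - Bh).mulVec u) ⬝ᵥ
            P.mulVec (A.mulVec e + (B - Bh).mulVec u)
          - e ⬝ᵥ P.mulVec e
          - γ * (u ⬝ᵥ u) < 0 := by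
  have hXsym : Xᵀ = X := hX.isHermitian
  let := hX.isUnit.invertible
  have hXP : X * P = 1 := hP ▸ mul_inv_of_invertible X
  set C := fromCols A (B - Bh)
  set T : Matrix (Fin nf ⊕ Fin nu) (Fin nf ⊕ Fin nu) ℝ := fromBlocks X 0 0 1
  have hT : IsUnit T := isUnit_fromBlocks_zero₂₁.mpr ⟨hX.isUnit, isUnit_one⟩
  have hCT : fromCols (A * X) (B - Bh) = C * T := by simp [C, T, fromCols_mul_fromBlocks]
  have hblocks : fromBlocks X (fromCols (A * X) (B - Bh)) (fromRows (X * Aᵀ) (Bᵀ - Bhᵀ))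
      (fromBlocks X 0 0 (γ • 1)) = fromBlocks X (C * T) (C * T)ᴴ
        (star T * fromBlocks P 0 0 (γ • 1) * T) := by
    rw [← hCT]
    simp [T, star_eq_conjTranspose, conjTranspose_eq_transpose_of_trivial, transpose_fromCols,
      fromBlocks_transpose, fromBlocks_multiply, hXsym, hXP]
  rw [← posDef_submatrix_equiv (Equiv.sumAssoc _ _ _).symm,
    fromBlocks_fromBlocks_submatrix_sumAssoc_symm, hblocks,
    hX.posDef_fromBlocks₁₁_mul_iff _ _ hT, ← hP, posDef_dissipation_iff (hP ▸ hX.isHermitian.inv)]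

/-- The first generalized H₂ synthesis LMI: with `P = X⁻¹` (`X` symmetric positive
definite), the block matrix `[[X, AX, B−B̂], [XAᵀ, X, 0], [Bᵀ−B̂ᵀ, 0, γI]]` is positive
definite iff `(Ae + (B−B̂)u)ᵀ P (Ae + (B−B̂)u) − eᵀPe − γ‖u‖₂² < 0` for all
`(e,u) ≠ (0,0)`. -/
theorem generalized_H2_LMI_iff {nf nu : ℕ}
    (A : Matrix (Fin nf) (Fin nf) ℝ)
    (B Bh : Matrix (Fin nf) (Fin nu) ℝ)
    (γ : ℝ) (hγ : 0 < γ)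
    (X : Matrix (Fin nf) (Fin nf) ℝ) (hX : X.PosDef)
    (P : Matrix (Fin nf) (Fin nf) ℝ) (hP : P = X⁻¹) :
    (Matrix.fromBlocks
        (Matrix.fromBlocks X (A * X) (X * Aᵀ) X)
        (Matrix.fromRows (B - Bh) (0 : Matrix (Fin nf) (Fin nu) ℝ))
        (Matrix.fromCols (Bᵀ - Bhᵀ) (0 : Matrix (Fin nu) (Fin nf) ℝ))
        (γ • (1 : Matrix (Fin nu) (Fin nu) ℝ))).PosDef
    ↔ ∀ (e : Fin nf → ℝ) (u : Fin nu → ℝ), (e ≠ 0 ∨ u ≠ 0) →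
        (A.mulVec e + (B - Bh).mulVec u) ⬝ᵥ
            P.mulVec (A.mulVec e + (B - Bh).mulVec u)
          - e ⬝ᵥ P.mulVec e
          - γ * (u ⬝ᵥ u) < 0 :=
  generalized_H2_LMI_iff_general A B Bh γ X hX P hP
end

section
/- Let A ∈ ℝ^{n_f×n_f}, B̂ ∈ ℝ^{n_f×n_u}, C ∈ ℝ^{n_x×n_f}, γ > 0, and let P ∈ ℝ^{n_f×n_f} be symmetric positive definite such that ‖C e‖₂² ≤ γ eᵀ P e for all e ∈ ℝ^{n_f}. Let (B_k)_{k≥0} be matrices in ℝ^{n_f×n_u} such that for all k and all (e, u) ∈ ℝ^{n_f} × ℝ^{n_u}: (A e + (B_k − B̂) u)ᵀ P (A e + (B_k − B̂) u) − eᵀ P e ≤ γ ‖u‖₂². Then every solution of e_{k+1} = A e_k + (B_k − B̂) u_k with e_0 = 0 satisfies, for every k ≥ 0, ‖C e_k‖₂² ≤ γ² Σ_{j=0}^{k−1} ‖u_j‖₂². -/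
open Matrix

/-- Generalized H₂ ('energy-to-peak') synthesis guarantee: if the quadratic dissipation
inequality with storage `V(e) = eᵀPe` and supply `γ‖u‖₂²` holds for all admissible input
matrices `B_k`, together with the output condition `‖Ce‖₂² ≤ γ eᵀPe`, then every
solution of the error dynamics `e⁺ = A e + (B_k − B̂) u_k` with `e₀ = 0` satisfies
`‖C e_k‖₂² ≤ γ² Σ_{j<k} ‖u_j‖₂²` for every `k`. -/
theorem generalized_H2_synthesis_guarantee {nf nu nx : ℕ}
    (A : Matrix (Fin nf) (Fin nf) ℝ)
    (Bh : Matrix (Fin nf) (Fin nu) ℝ)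
    (C : Matrix (Fin nx) (Fin nf) ℝ)
    (γ : ℝ) (hγ : 0 < γ)
    (P : Matrix (Fin nf) (Fin nf) ℝ) (hP : P.PosDef)
    (hout : ∀ e : Fin nf → ℝ,
      (C.mulVec e) ⬝ᵥ (C.mulVec e) ≤ γ * (e ⬝ᵥ P.mulVec e))
    (B : ℕ → Matrix (Fin nf) (Fin nu) ℝ)
    (hdiss : ∀ (k : ℕ) (e : Fin nf → ℝ) (u : Fin nu → ℝ),
      (A.mulVec e + (B k - Bh).mulVec u) ⬝ᵥ
          P.mulVec (A.mulVec e + (B k - Bh).mulVec u)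
        - e ⬝ᵥ P.mulVec e
        ≤ γ * (u ⬝ᵥ u))
    (e : ℕ → Fin nf → ℝ) (u : ℕ → Fin nu → ℝ)
    (he0 : e 0 = 0)
    (hdyn : ∀ k, e (k + 1) = A.mulVec (e k) + (B k - Bh).mulVec (u k)) :
    ∀ k, (C.mulVec (e k)) ⬝ᵥ (C.mulVec (e k)) ≤
      γ ^ 2 * ∑ j ∈ Finset.range k, (u j) ⬝ᵥ (u j) := by
  have hV : ∀ k, (e k) ⬝ᵥ P.mulVec (e k) ≤
      γ * ∑ j ∈ Finset.range k, (u j) ⬝ᵥ (u j) := by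
    intro k
    induction k with
    | zero => simp [he0]
    | succ k ih =>
      have h := hdiss k (e k) (u k)
      rw [← hdyn k] at h
      rw [Finset.sum_range_succ, mul_add]
      linarith
  intro k
  calc (C.mulVec (e k)) ⬝ᵥ (C.mulVec (e k)) ≤ γ * ((e k) ⬝ᵥ P.mulVec (e k)) :=
        hout (e k)
    _ ≤ γ * (γ * ∑ j ∈ Finset.range k, (u j) ⬝ᵥ (u j)) := by
        exact mul_le_mul_of_nonneg_left (hV k) hγ.le
    _ = γ ^ 2 * ∑ j ∈ Finset.range k, (u j) ⬝ᵥ (u j) := by ring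
end
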